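/- Let p be a prime with p ≡ 3 (mod 4). Then the following exact identity of rational numbers holds: ∑_{k=0}^{p-1} C(p−1, k)·(−1)^k·(2^{−k} + 1)·u_k(2,2) = (−1)^{(p+1)/4} / 2^{(p−1)/2}. -/

import Mathlib

/-- The Lucas sequence `u_n(A,B)`. -/
def lucasU (A B : ℤ) : ℕ → ℤ
  | 0 => 0
  | 1 => 1
  | n + 2 => A * lucasU A B (n + 1) - B * lucasU A B n

/-!
With `α, β = 1 ± i` the roots of `X² - 2X + 2`, Binet's formula `u_k (α - β) = α^k - β^k` turns
`∑ C(n,k) c^k u_k` into `((1 + cα)^n - (1 + cβ)^n) / (α - β)`. Since `α + β = 2`, the weight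
`c = -1/2` gives `-u_n / 2^n` and, for even `n`, the weight `c = -1` gives `0`. For `n = p - 1 = 4j + 2`
the recurrence `u_{m+4} = -4 u_m` yields `u_n = (-1)^j 2^(2j+1)`.
-/

open Finset

section Binet

variable {R : Type*} [CommRing R] {A B : ℤ} {α β : R}

theorem lucasU_mul_sub (hsum : α + β = A) (hprod : α * β = B) (k : ℕ) :
    (lucasU A B k : R) * (α - β) = α ^ k - β ^ k := by
  induction k using Nat.twoStepInduction with
  | zero => simp [lucasU]
  | one => simp [lucasU]
  | more n ih₀ ih₁ =>
    simp only [lucasU, Int.cast_sub, Int.cast_mul, ← hsum, ← hprod]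
    linear_combination (α + β) * ih₁ - α * β * ih₀

theorem sum_choose_mul_pow_mul_lucasU (hsum : α + β = A) (hprod : α * β = B) (n : ℕ) (c : R) :
    (∑ k ∈ range (n + 1), (n.choose k : R) * c ^ k * (lucasU A B k : R)) * (α - β) =
      (c * α + 1) ^ n - (c * β + 1) ^ n := by
  simp only [add_pow, one_pow, mul_one, sum_mul, ← sum_sub_distrib]
  refine sum_congr rfl fun k _ => ?_
  rw [mul_assoc, lucasU_mul_sub hsum hprod, mul_pow, mul_pow]
  ring

theorem sum_choose_neg_one_pow_mul_lucasU_two [NoZeroDivisors R] (hsum : α + β = 2)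
    (hprod : α * β = B) (hne : α ≠ β) {n : ℕ} (hn : Even n) :
    ∑ k ∈ range (n + 1), (n.choose k : R) * (-1) ^ k * (lucasU 2 B k : R) = 0 := by
  have h := sum_choose_mul_pow_mul_lucasU (A := 2) (by rw [hsum, Int.cast_ofNat]) hprod n (-1 : R)
  have hβ : -1 * β + 1 = -(-1 * α + 1) := by linear_combination -hsum
  rw [hβ, hn.neg_pow, sub_self] at h
  exact (mul_eq_zero.mp h).resolve_right (sub_ne_zero.mpr hne)

end Binet

theorem sum_choose_neg_half_pow_mul_lucasU_two {K : Type*} [Field K] [CharZero K] {B : ℤ}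
    {α β : K} (hsum : α + β = 2) (hprod : α * β = B) (hne : α ≠ β) (n : ℕ) :
    ∑ k ∈ range (n + 1), (n.choose k : K) * (-2⁻¹) ^ k * (lucasU 2 B k : K) =
      -(lucasU 2 B n : K) / 2 ^ n := by
  have hsum' : α + β = ((2 : ℤ) : K) := by rw [hsum, Int.cast_ofNat]
  have h := sum_choose_mul_pow_mul_lucasU hsum' hprod n (-2⁻¹ : K)
  have hα : -2⁻¹ * α + 1 = β / 2 := by linear_combination (-2⁻¹ : K) * hsum
  have hβ : -2⁻¹ * β + 1 = α / 2 := by linear_combination (-2⁻¹ : K) * hsum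
  rw [hα, hβ] at h
  refine mul_right_cancel₀ (sub_ne_zero.mpr hne) ?_
  rw [h, neg_div, neg_mul, div_mul_eq_mul_div, lucasU_mul_sub hsum' hprod, div_pow, div_pow]
  ring

theorem lucasU_two_two_add_four (n : ℕ) : lucasU 2 2 (n + 4) = -4 * lucasU 2 2 n := by
  simp only [lucasU]
  ring

theorem lucasU_two_two_four_mul_add_two (j : ℕ) :
    lucasU 2 2 (4 * j + 2) = (-1) ^ j * 2 ^ (2 * j + 1) := by
  induction j with
  | zero => rfl
  | succ j ih =>
    rw [show 4 * (j + 1) + 2 = 4 * j + 2 + 4 by ring, lucasU_two_two_add_four, ih]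
    ring

theorem stmt18_general (p : ℕ) (h4 : p % 4 = 3) :
    ∑ k ∈ Finset.range p,
        (Nat.choose (p - 1) k : ℚ) * (-1 : ℚ) ^ k * ((2 : ℚ) ^ (-(k : ℤ)) + 1) *
          (lucasU 2 2 k : ℚ) =
      (-1 : ℚ) ^ ((p + 1) / 4) / 2 ^ ((p - 1) / 2) := by
  obtain ⟨j, rfl⟩ : ∃ j, p = 4 * j + 2 + 1 := ⟨p / 4, by omega⟩
  have hsum : (1 + Complex.I) + (1 - Complex.I) = 2 := by ring
  have hprod : (1 + Complex.I) * (1 - Complex.I) = ((2 : ℤ) : ℂ) := by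
    push_cast
    linear_combination -Complex.I_sq
  have hne : 1 + Complex.I ≠ 1 - Complex.I := by
    norm_num [sub_eq_add_neg, Complex.ext_iff]
  have hsplit (k : ℕ) :
      (Nat.choose (4 * j + 2) k : ℚ) * (-1) ^ k * ((2 : ℚ) ^ (-(k : ℤ)) + 1) * (lucasU 2 2 k : ℚ) =
        (Nat.choose (4 * j + 2) k : ℚ) * (-2⁻¹) ^ k * (lucasU 2 2 k : ℚ) +
          (Nat.choose (4 * j + 2) k : ℚ) * (-1) ^ k * (lucasU 2 2 k : ℚ) := by
    rw [zpow_neg, zpow_natCast, neg_pow (2⁻¹ : ℚ), inv_pow]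
    ring
  rw [Nat.add_sub_cancel, sum_congr rfl fun k _ => hsplit k, sum_add_distrib]
  apply Rat.cast_injective (α := ℂ)
  push_cast
  rw [sum_choose_neg_half_pow_mul_lucasU_two hsum hprod hne,
    sum_choose_neg_one_pow_mul_lucasU_two hsum hprod hne (by simp [parity_simps]),
    lucasU_two_two_four_mul_add_two,
    show (4 * j + 2 + 1 + 1) / 4 = j + 1 by omega, show (4 * j + 2) / 2 = 2 * j + 1 by omega]
  push_cast
  field_simp
  ring

theorem stmt18 (p : ℕ) (hp : p.Prime) (h4 : p % 4 = 3) :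
    ∑ k ∈ Finset.range p,
        (Nat.choose (p - 1) k : ℚ) * (-1 : ℚ) ^ k * ((2 : ℚ) ^ (-(k : ℤ)) + 1) *
          (lucasU 2 2 k : ℚ) =
      (-1 : ℚ) ^ ((p + 1) / 4) / 2 ^ ((p - 1) / 2) :=
  stmt18_general p h4
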